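/- arXiv:0711.0284 — 2 statements merged into one kernel-verified Lean document; each statement's English description precedes it below -/
import Mathlib

section
/- Let T and A be generators of C₀-semigroups on a Banach space X, and suppose the pair {T, A} is renormalizable with constants β_T and β_A, i.e. for each f ∈ X, sup over all n ∈ ℕ and nonnegative τ₁,…,τₙ, σ₁,…,σₙ of e^{-β_T Στ_k}·e^{-β_A Σσ_k}·‖e^{τ₁T}e^{σ₁A}···e^{τₙT}e^{σₙA}f‖ is finite. Then the quantity |||f||| defined as this supremum is a norm equivalent to the original norm (‖f‖ ≤ |||f||| ≤ M‖f‖ for some M), and in this norm ‖e^{τT}‖ ≤ e^{β_T τ} and ‖e^{σA}‖ ≤ e^{β_A σ}. -/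
theorem stmt_6 {X : Type*} [NormedAddCommGroup X] [NormedSpace ℝ X] [CompleteSpace X]
    (UT UA : ℝ → X →L[ℝ] X) (βT βA : ℝ)
    (hT0 : UT 0 = 1) (hA0 : UA 0 = 1)
    (hTadd : ∀ s t : ℝ, 0 ≤ s → 0 ≤ t → UT (s + t) = UT s * UT t)
    (hAadd : ∀ s t : ℝ, 0 ≤ s → 0 ≤ t → UA (s + t) = UA s * UA t)
    (hTcont : ∀ f : X, ContinuousOn (fun σ => UT σ f) (Set.Ici 0))
    (hAcont : ∀ f : X, ContinuousOn (fun σ => UA σ f) (Set.Ici 0))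
    (hren : ∀ f : X, BddAbove (Set.range
      fun l : {l : List (ℝ × ℝ) // ∀ p ∈ l, 0 ≤ p.1 ∧ 0 ≤ p.2} =>
        Real.exp (-(βT * (l.1.map Prod.fst).sum)) * Real.exp (-(βA * (l.1.map Prod.snd).sum)) *
          ‖(l.1.map fun p => UT p.1 * UA p.2).prod f‖))
    (N : X → ℝ)
    (hN : ∀ f, N f = ⨆ l : {l : List (ℝ × ℝ) // ∀ p ∈ l, 0 ≤ p.1 ∧ 0 ≤ p.2},
      Real.exp (-(βT * (l.1.map Prod.fst).sum)) * Real.exp (-(βA * (l.1.map Prod.snd).sum)) *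
        ‖(l.1.map fun p => UT p.1 * UA p.2).prod f‖) :
    (∃ M : ℝ, ∀ f, ‖f‖ ≤ N f ∧ N f ≤ M * ‖f‖) ∧
    (∀ f g, N (f + g) ≤ N f + N g) ∧
    (∀ (a : ℝ) (f : X), N (a • f) = |a| * N f) ∧
    (∀ τ : ℝ, 0 ≤ τ → ∀ f, N (UT τ f) ≤ Real.exp (βT * τ) * N f) ∧
    (∀ σ : ℝ, 0 ≤ σ → ∀ f, N (UA σ f) ≤ Real.exp (βA * σ) * N f) := by
  classical
  haveI hne : Nonempty {l : List (ℝ × ℝ) // ∀ p ∈ l, 0 ≤ p.1 ∧ 0 ≤ p.2} :=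
    ⟨⟨[], by simp⟩⟩
  set ι := {l : List (ℝ × ℝ) // ∀ p ∈ l, 0 ≤ p.1 ∧ 0 ≤ p.2}
  have c : ι → ℝ := fun l =>
    Real.exp (-(βT * (l.1.map Prod.fst).sum)) * Real.exp (-(βA * (l.1.map Prod.snd).sum))
  let cc : ι → ℝ := fun l =>
    Real.exp (-(βT * (l.1.map Prod.fst).sum)) * Real.exp (-(βA * (l.1.map Prod.snd).sum))
  let P : ι → (X →L[ℝ] X) := fun l => (l.1.map fun p => UT p.1 * UA p.2).prod
  have hcpos : ∀ l, 0 < cc l := fun l => mul_pos (Real.exp_pos _) (Real.exp_pos _)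
  have hNf : ∀ f, N f = ⨆ l : ι, cc l * ‖P l f‖ := hN
  have hbdd : ∀ f, BddAbove (Set.range fun l : ι => cc l * ‖P l f‖) := hren
  have hle : ∀ (f : X) (l : ι), cc l * ‖P l f‖ ≤ N f := by
    intro f l
    rw [hNf]
    exact le_ciSup (hbdd f) l
  have hemp : ∀ p : ℝ × ℝ, p ∈ ([] : List (ℝ × ℝ)) → 0 ≤ p.1 ∧ 0 ≤ p.2 := by simp
  have hnil : ∀ f : X, cc ⟨[], hemp⟩ * ‖P ⟨[], hemp⟩ f‖ = ‖f‖ := by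
    intro f
    simp [cc, P]
  have h1 : ∀ f : X, ‖f‖ ≤ N f := by
    intro f
    rw [← hnil f]
    exact hle f _
  -- Banach-Steinhaus
  let G : ι → (X →L[ℝ] X) := fun l => cc l • P l
  have hG : ∀ (l : ι) (f : X), ‖G l f‖ = cc l * ‖P l f‖ := by
    intro l f
    simp [G, norm_smul, abs_of_pos (hcpos l)]
  obtain ⟨M, hM⟩ : ∃ M, ∀ l, ‖G l‖ ≤ M := by
    apply banach_steinhaus
    intro f
    obtain ⟨C, hC⟩ := hbdd f
    exact ⟨C, fun l => (hG l f).le.trans (hC ⟨l, rfl⟩)⟩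
  refine ⟨⟨M, fun f => ⟨h1 f, ?_⟩⟩, ?_, ?_, ?_, ?_⟩
  · rw [hNf]
    apply ciSup_le
    intro l
    calc cc l * ‖P l f‖ = ‖G l f‖ := (hG l f).symm
      _ ≤ ‖G l‖ * ‖f‖ := (G l).le_opNorm f
      _ ≤ M * ‖f‖ := mul_le_mul_of_nonneg_right (hM l) (norm_nonneg f)
  · intro f g
    rw [hNf]
    apply ciSup_le
    intro l
    calc cc l * ‖P l (f + g)‖ ≤ cc l * (‖P l f‖ + ‖P l g‖) := by
          rw [map_add]
          exact mul_le_mul_of_nonneg_left (norm_add_le _ _) (hcpos l).le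
      _ = cc l * ‖P l f‖ + cc l * ‖P l g‖ := by ring
      _ ≤ N f + N g := add_le_add (hle f l) (hle g l)
  · intro a f
    rw [hNf, hNf, Real.mul_iSup_of_nonneg (abs_nonneg a)]
    congr 1
    funext l
    rw [map_smul, norm_smul, Real.norm_eq_abs]
    ring
  · intro τ hτ f
    rw [hNf (UT τ f)]
    apply ciSup_le
    intro l
    have hl' : ∀ p : ℝ × ℝ, p ∈ l.1 ++ [(τ, (0:ℝ))] → 0 ≤ p.1 ∧ 0 ≤ p.2 := by
      intro p hp
      rcases List.mem_append.1 hp with h | h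
      · exact l.2 p h
      · simp at h; subst h; exact ⟨hτ, le_refl 0⟩
    set l' : ι := ⟨l.1 ++ [(τ, 0)], hl'⟩ with hl'def
    have hP' : P l' = P l * UT τ := by
      simp only [P, hl'def, List.map_append, List.prod_append, List.map_cons, List.map_nil,
        List.prod_cons, List.prod_nil, hA0, mul_one, one_mul]
    have hc' : cc l' = cc l * Real.exp (-(βT * τ)) := by
      simp only [cc, hl'def, List.map_append, List.sum_append, List.map_cons, List.map_nil,
        List.sum_cons, List.sum_nil, add_zero, mul_add, neg_add, Real.exp_add]
      ring
    have key : cc l * ‖P l (UT τ f)‖ = Real.exp (βT * τ) * (cc l' * ‖P l' f‖) := by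
      rw [hP', hc', ContinuousLinearMap.mul_apply, Real.exp_neg]
      field_simp
    rw [key]
    exact mul_le_mul_of_nonneg_left (hle f l') (Real.exp_pos _).le
  · intro σ hσ f
    rw [hNf (UA σ f)]
    apply ciSup_le
    intro l
    have hl' : ∀ p : ℝ × ℝ, p ∈ l.1 ++ [((0:ℝ), σ)] → 0 ≤ p.1 ∧ 0 ≤ p.2 := by
      intro p hp
      rcases List.mem_append.1 hp with h | h
      · exact l.2 p h
      · simp at h; subst h; exact ⟨le_refl 0, hσ⟩
    set l' : ι := ⟨l.1 ++ [(0, σ)], hl'⟩ with hl'def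
    have hP' : P l' = P l * UA σ := by
      simp only [P, hl'def, List.map_append, List.prod_append, List.map_cons, List.map_nil,
        List.prod_cons, List.prod_nil, hT0, one_mul, mul_one]
    have hc' : cc l' = cc l * Real.exp (-(βA * σ)) := by
      simp only [cc, hl'def, List.map_append, List.sum_append, List.map_cons, List.map_nil,
        List.sum_cons, List.sum_nil, add_zero, mul_add, neg_add, Real.exp_add]
      ring
    have key : cc l * ‖P l (UA σ f)‖ = Real.exp (βA * σ) * (cc l' * ‖P l' f‖) := by
      rw [hP', hc', ContinuousLinearMap.mul_apply, Real.exp_neg]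
      field_simp
    rw [key]
    exact mul_le_mul_of_nonneg_left (hle f l') (Real.exp_pos _).le
end

section
/- Let T̂ and Â be generators of contraction C₀-semigroups (class G(1,0)) on a Banach space Y. Suppose dom(Â*) is dense in Y*. Then for every ξ < 0 and every g ∈ dom(T̂*) ∩ dom(Â*), one has |ξ|·‖g‖_{Y*} ≤ ‖T̂*g + Â*g + ξg‖_{Y*}. -/
open Filter Topology

/-- `T`, defined on the submodule `D` of `Y`, is the generator of a contraction
`C₀`-semigroup (class `G(1,0)`) on `Y`. -/
def IsContractionSemigroupGenerator {Y : Type*} [NormedAddCommGroup Y] [NormedSpace ℝ Y]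
    (D : Submodule ℝ Y) (T : D →ₗ[ℝ] Y) : Prop :=
  ∃ U : ℝ → Y →L[ℝ] Y,
    U 0 = 1 ∧
    (∀ s t : ℝ, 0 ≤ s → 0 ≤ t → U (s + t) = U s * U t) ∧
    (∀ σ : ℝ, 0 ≤ σ → ‖U σ‖ ≤ 1) ∧
    (∀ f : Y, ContinuousOn (fun σ => U σ f) (Set.Ici 0)) ∧
    (∀ f : Y, f ∈ D ↔ ∃ g : Y,
      Tendsto (fun σ : ℝ => σ⁻¹ • (U σ f - f)) (𝓝[>] 0) (𝓝 g)) ∧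
    (∀ f : D, Tendsto (fun σ : ℝ => σ⁻¹ • (U σ (f : Y) - (f : Y))) (𝓝[>] 0) (𝓝 (T f)))

section Res
open MeasureTheory Set

variable {Y : Type*} [NormedAddCommGroup Y] [NormedSpace ℝ Y] [CompleteSpace Y]

lemma exp_int {ν : ℝ} (hν : 0 < ν) : ∫ τ in Ioi (0:ℝ), Real.exp (-(ν*τ)) = ν⁻¹ := by
  have : ∫ τ in Ioi (0:ℝ), Real.exp (-(ν*τ)) =
      (0 : ℝ) - (fun τ : ℝ => -ν⁻¹ * Real.exp (-(ν*τ))) 0 := by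
    refine integral_Ioi_of_hasDerivAt_of_tendsto
      (f := fun τ : ℝ => -ν⁻¹ * Real.exp (-(ν*τ)))
      (f' := fun τ : ℝ => Real.exp (-(ν*τ))) ?_ ?_ ?_ ?_
    · exact (Continuous.continuousWithinAt (by continuity))
    · intro x _
      have h1 : HasDerivAt (fun τ : ℝ => -(ν*τ)) (-ν) x := by
        simpa [Pi.neg_def] using ((hasDerivAt_id x).const_mul ν).neg
      have := (Real.hasDerivAt_exp (-(ν*x))).comp x h1
      have h2 := this.const_mul (-ν⁻¹)
      convert h2 using 1
      exacts [rfl, rfl, by field_simp]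
    · simpa only [neg_mul] using exp_neg_integrableOn_Ioi 0 hν
    · have : Tendsto (fun τ : ℝ => Real.exp (-(ν*τ))) atTop (𝓝 0) := by
        exact Real.tendsto_exp_neg_atTop_nhds_zero.comp (tendsto_id.const_mul_atTop hν)
      have h := this.const_mul (-ν⁻¹)
      rw [mul_zero] at h
      exact h
  simpa using this

lemma csg_resolvent (D : Submodule ℝ Y) (T : D →ₗ[ℝ] Y)
    (hT : IsContractionSemigroupGenerator D T) {ν : ℝ} (hν : 0 < ν) :
    ∃ R : Y →L[ℝ] Y, (∀ f : Y, ‖R f‖ ≤ ν⁻¹ * ‖f‖) ∧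
      ∀ f : Y, ∃ hf : R f ∈ D, T ⟨R f, hf⟩ = ν • R f - f := by
  obtain ⟨U, hU0, hUadd, hUnorm, hUcont, hUdom, hUgen⟩ := hT
  have hUb : ∀ (τ : ℝ), 0 ≤ τ → ∀ y : Y, ‖U τ y‖ ≤ ‖y‖ := fun τ hτ y => by
    simpa using (U τ).le_of_opNorm_le (hUnorm τ hτ) y
  set F : Y → ℝ → Y := fun f τ => Real.exp (-(ν*τ)) • U τ f with hF
  have hFcont : ∀ f, ContinuousOn (F f) (Ici 0) := fun f =>
    (Continuous.continuousOn (by continuity)).smul (hUcont f)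
  have hFnorm : ∀ f, ∀ τ ∈ Ioi (0:ℝ), ‖F f τ‖ ≤ Real.exp (-(ν*τ)) * ‖f‖ := by
    intro f τ hτ
    rw [hF]
    simp only [norm_smul, Real.norm_eq_abs, Real.abs_exp]
    exact mul_le_mul_of_nonneg_left (hUb τ (le_of_lt hτ) f) (Real.exp_pos _).le
  have hFint : ∀ f, IntegrableOn (F f) (Ioi 0) := by
    intro f
    have hm : AEStronglyMeasurable (F f) (volume.restrict (Ioi 0)) :=
      ((hFcont f).mono Ioi_subset_Ici_self).aestronglyMeasurable measurableSet_Ioi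
    have hdom : IntegrableOn (fun τ => Real.exp (-(ν*τ)) * ‖f‖) (Ioi 0) := by
      have h0 := (exp_neg_integrableOn_Ioi 0 hν).mul_const ‖f‖
      simp only [neg_mul] at h0 ⊢
      exact h0
    exact hdom.mono' hm
      ((ae_restrict_iff' measurableSet_Ioi).2 (Eventually.of_forall (hFnorm f)))
  set R0 : Y →ₗ[ℝ] Y :=
    { toFun := fun f => ∫ τ in Ioi 0, F f τ
      map_add' := by
        intro f g
        rw [← integral_add (hFint f) (hFint g)]
        apply integral_congr_ae
        filter_upwards with τ
        simp [hF, smul_add]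
      map_smul' := by
        intro c f
        rw [← integral_smul]
        apply integral_congr_ae
        filter_upwards with τ
        simp [hF, smul_comm c] } with hR0
  have hRb : ∀ f : Y, ‖R0 f‖ ≤ ν⁻¹ * ‖f‖ := by
    intro f
    have h1 : ‖R0 f‖ ≤ ∫ τ in Ioi 0, Real.exp (-(ν*τ)) * ‖f‖ := by
      apply norm_integral_le_of_norm_le
      · simpa only [neg_mul] using (exp_neg_integrableOn_Ioi 0 hν).mul_const ‖f‖
      · exact (ae_restrict_iff' measurableSet_Ioi).2 (Eventually.of_forall (hFnorm f))
    rw [integral_mul_const, exp_int hν] at h1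
    exact h1
  have hmain : ∀ f : Y, ∃ hf : R0 f ∈ D, T ⟨R0 f, hf⟩ = ν • R0 f - f := by
    intro f
    -- commutation and shift
    have hshift : ∀ σ : ℝ, ∫ τ in Ioi (0:ℝ), F f (τ + σ) = ∫ τ in Ioi σ, F f τ := by
      intro σ
      have hpre : (fun x : ℝ => x + σ) ⁻¹' (Ioi σ) = Ioi 0 := by
        ext x; simp [Set.mem_Ioi]
      have h := (measurePreserving_add_right volume σ).setIntegral_preimage_emb
        (measurableEmbedding_addRight σ) (F f) (Ioi σ)
      rw [hpre] at h
      exact h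
    have key : ∀ σ : ℝ, 0 < σ →
        U σ (R0 f) = Real.exp (ν*σ) • ∫ τ in Ioi σ, F f τ := by
      intro σ hσ
      have h1 : U σ (R0 f) = ∫ τ in Ioi 0, U σ (F f τ) :=
        ((U σ).integral_comp_comm (hFint f)).symm
      have h2 : EqOn (fun τ => U σ (F f τ))
          (fun τ => Real.exp (ν*σ) • F f (τ + σ)) (Ioi 0) := by
        intro τ hτ
        have hτ0 : (0:ℝ) < τ := hτ
        have hadd : U (σ + τ) = U σ * U τ := hUadd σ τ hσ.le hτ0.le
        show U σ (Real.exp (-(ν*τ)) • U τ f) = Real.exp (ν*σ) • F f (τ + σ)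
        rw [ContinuousLinearMap.map_smul]
        have : U σ (U τ f) = U (σ + τ) f := by
          rw [hadd]; rfl
        rw [this, hF]
        simp only [smul_smul]
        rw [← Real.exp_add]
        congr 2
        · ring
        · rw [add_comm]
      rw [h1, setIntegral_congr_fun measurableSet_Ioi h2, integral_smul, hshift σ]
    have hsplit : ∀ σ : ℝ, 0 < σ →
        R0 f = (∫ τ in Ioc 0 σ, F f τ) + ∫ τ in Ioi σ, F f τ := by
      intro σ hσ
      have : R0 f = ∫ τ in Ioc 0 σ ∪ Ioi σ, F f τ := by
        show (∫ τ in Ioi 0, F f τ) = _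
        rw [Ioc_union_Ioi_eq_Ioi hσ.le]
      rw [this, setIntegral_union (Ioc_disjoint_Ioi le_rfl) measurableSet_Ioi
        ((hFint f).mono_set Ioc_subset_Ioi_self) ((hFint f).mono_set (Ioi_subset_Ioi hσ.le))]
    have hFbound : ∀ τ ∈ Ioi (0:ℝ), ‖F f τ‖ ≤ ‖f‖ := by
      intro τ hτ
      refine (hFnorm f τ hτ).trans ?_
      have h1 : Real.exp (-(ν*τ)) ≤ 1 := by
        rw [Real.exp_le_one_iff]
        have : (0:ℝ) < ν*τ := mul_pos hν hτ
        linarith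
      nlinarith [norm_nonneg f]
    -- (a) J tendsto
    have hJ : Tendsto (fun σ : ℝ => ∫ τ in Ioi σ, F f τ) (𝓝[>] 0) (𝓝 (R0 f)) := by
      have hb : ∀ᶠ σ : ℝ in 𝓝[>] 0,
          ‖(∫ τ in Ioi σ, F f τ) - R0 f‖ ≤ ‖f‖ * σ := by
        filter_upwards [self_mem_nhdsWithin] with σ hσ
        have hσ' : (0:ℝ) < σ := hσ
        have h1 : (∫ τ in Ioi σ, F f τ) - R0 f = -∫ τ in Ioc 0 σ, F f τ := by
          rw [hsplit σ hσ']; abel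
        rw [h1, norm_neg]
        have h2 : ‖∫ τ in Ioc 0 σ, F f τ‖ ≤ ‖f‖ * (volume (Ioc (0:ℝ) σ)).toReal := by
          apply norm_setIntegral_le_of_norm_le_const
          · rw [Real.volume_Ioc]; exact ENNReal.ofReal_lt_top
          · intro τ hτ; exact hFbound τ (Ioc_subset_Ioi_self hτ)
        rwa [Real.volume_Ioc, sub_zero, ENNReal.toReal_ofReal hσ'.le] at h2
      have hz : Tendsto (fun σ : ℝ => ‖f‖ * σ) (𝓝[>] 0) (𝓝 0) := by
        have := (tendsto_id.const_mul ‖f‖ : Tendsto (fun σ : ℝ => ‖f‖ * σ) (𝓝 0) (𝓝 (‖f‖ * 0)))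
        rw [mul_zero] at this
        exact this.mono_left nhdsWithin_le_nhds
      have := squeeze_zero_norm' hb hz
      rwa [← tendsto_sub_nhds_zero_iff]
    -- (b) exponential quotient
    have hq : Tendsto (fun σ : ℝ => σ⁻¹ * (Real.exp (ν*σ) - 1)) (𝓝[>] 0) (𝓝 ν) := by
      have hd : HasDerivAt (fun σ : ℝ => Real.exp (ν*σ)) ν 0 := by
        have h1 : HasDerivAt (fun σ : ℝ => ν*σ) ν 0 := by
          simpa using (hasDerivAt_id (0:ℝ)).const_mul ν
        have := (Real.hasDerivAt_exp (ν*0)).comp 0 h1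
        simpa [Function.comp_def] using this
      have hs := hd.hasDerivWithinAt (s := Ioi 0)
      have := hasDerivWithinAt_iff_tendsto_slope.1 hs
      have h2 : Tendsto (slope (fun σ : ℝ => Real.exp (ν*σ)) 0) (𝓝[>] 0) (𝓝 ν) := by
        apply this.mono_left
        apply nhdsWithin_mono
        intro x hx
        exact ⟨hx, ne_of_gt hx⟩
      apply h2.congr'
      filter_upwards [self_mem_nhdsWithin] with σ hσ
      have hσ' : (0:ℝ) < σ := hσ
      rw [slope_def_field, mul_zero, Real.exp_zero, sub_zero, div_eq_inv_mul]
    -- (c) average tendsto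
    have havg : Tendsto (fun σ : ℝ => σ⁻¹ • ∫ τ in Ioc 0 σ, F f τ) (𝓝[>] 0) (𝓝 f) := by
      rw [Metric.tendsto_nhdsWithin_nhds]
      intro ε hε
      have hc : ContinuousWithinAt (F f) (Ici 0) 0 := (hFcont f) 0 (self_mem_Ici)
      rw [Metric.continuousWithinAt_iff] at hc
      obtain ⟨δ, hδ, hδ'⟩ := hc (ε/2) (half_pos hε)
      refine ⟨δ, hδ, ?_⟩
      intro σ hσ hσδ
      have hσ' : (0:ℝ) < σ := hσ
      have hF0 : F f 0 = f := by
        rw [hF]; simp [hU0]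
      have hIoc : ∀ τ ∈ Ioc (0:ℝ) σ, ‖F f τ - f‖ ≤ ε/2 := by
        intro τ hτ
        have h1 : τ ∈ Ici (0:ℝ) := le_of_lt hτ.1
        have h2 : dist τ 0 < δ := by
          rw [Real.dist_eq, sub_zero, abs_of_pos hτ.1]
          calc τ ≤ σ := hτ.2
          _ < δ := by rwa [Real.dist_eq, sub_zero, abs_of_pos hσ'] at hσδ
        have := hδ' h1 h2
        rw [dist_eq_norm, hF0] at this
        exact this.le
      have hconst : ∫ _ in Ioc (0:ℝ) σ, f = σ • f := by
        rw [setIntegral_const, Real.volume_real_Ioc_of_le hσ'.le, sub_zero]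
      have hintIoc : IntegrableOn (F f) (Ioc 0 σ) := (hFint f).mono_set Ioc_subset_Ioi_self
      have hdiff : (σ⁻¹ • ∫ τ in Ioc 0 σ, F f τ) - f
          = σ⁻¹ • ∫ τ in Ioc 0 σ, (F f τ - f) := by
        rw [integral_sub hintIoc (integrableOn_const (by
          rw [Real.volume_Ioc]; exact ENNReal.ofReal_ne_top))]
        rw [hconst, smul_sub, smul_smul, inv_mul_cancel₀ hσ'.ne', one_smul]
      rw [dist_eq_norm, hdiff]
      have h3 : ‖∫ τ in Ioc 0 σ, (F f τ - f)‖ ≤ (ε/2) * (volume (Ioc (0:ℝ) σ)).toReal := by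
        apply norm_setIntegral_le_of_norm_le_const
        · rw [Real.volume_Ioc]; exact ENNReal.ofReal_lt_top
        · exact hIoc
      rw [Real.volume_Ioc, sub_zero, ENNReal.toReal_ofReal hσ'.le] at h3
      have h4 : ‖σ⁻¹ • ∫ τ in Ioc 0 σ, (F f τ - f)‖ ≤ σ⁻¹ * ((ε/2) * σ) := by
        rw [norm_smul, Real.norm_eq_abs, abs_of_pos (inv_pos.2 hσ')]
        exact mul_le_mul_of_nonneg_left h3 (inv_pos.2 hσ').le
      calc ‖σ⁻¹ • ∫ τ in Ioc 0 σ, (F f τ - f)‖ ≤ σ⁻¹ * ((ε/2) * σ) := h4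
      _ = ε/2 := by field_simp
      _ < ε := half_lt_self hε
    -- combine
    have hcomb : Tendsto (fun σ : ℝ => σ⁻¹ • (U σ (R0 f) - R0 f)) (𝓝[>] 0)
        (𝓝 (ν • R0 f - f)) := by
      have heq : ∀ᶠ σ : ℝ in 𝓝[>] 0, ((σ⁻¹ * (Real.exp (ν*σ) - 1)) • (∫ τ in Ioi σ, F f τ))
          - σ⁻¹ • ∫ τ in Ioc 0 σ, F f τ = σ⁻¹ • (U σ (R0 f) - R0 f) := by
        filter_upwards [self_mem_nhdsWithin] with σ hσ
        have hσ' : (0:ℝ) < σ := hσ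
        rw [key σ hσ', hsplit σ hσ']
        module
      have h1 := (hq.smul hJ).sub havg
      exact (Tendsto.congr' heq h1)
    have hmem : R0 f ∈ D := (hUdom (R0 f)).2 ⟨ν • R0 f - f, hcomb⟩
    refine ⟨hmem, ?_⟩
    exact tendsto_nhds_unique (hUgen ⟨R0 f, hmem⟩) hcomb
  exact ⟨R0.mkContinuous ν⁻¹ hRb, hRb, hmain⟩


lemma gen_norming_nonpos (D : Submodule ℝ Y) (T : D →ₗ[ℝ] Y)
    (hT : IsContractionSemigroupGenerator D T) (f : D) (φ : Y →L[ℝ] ℝ)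
    (hφ : ‖φ‖ ≤ 1) (hφf : φ (f : Y) = ‖(f : Y)‖) : φ (T f) ≤ 0 := by
  obtain ⟨U, hU0, hUadd, hUnorm, hUcont, hUdom, hUgen⟩ := hT
  have hUb : ∀ (τ : ℝ), 0 ≤ τ → ∀ y : Y, ‖U τ y‖ ≤ ‖y‖ := fun τ hτ y => by
    simpa using (U τ).le_of_opNorm_le (hUnorm τ hτ) y
  have hl : Tendsto (fun σ : ℝ => φ (σ⁻¹ • (U σ (f : Y) - (f : Y)))) (𝓝[>] 0)
      (𝓝 (φ (T f))) := (φ.continuous.tendsto _).comp (hUgen f)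
  refine le_of_tendsto hl ?_
  filter_upwards [self_mem_nhdsWithin] with σ hσ
  have hσ' : (0:ℝ) < σ := hσ
  rw [_root_.map_smul]
  have h1 : φ (U σ (f : Y) - (f : Y)) ≤ 0 := by
    rw [map_sub, hφf]
    have h2 : φ (U σ (f : Y)) ≤ ‖U σ (f : Y)‖ := by
      calc φ (U σ (f : Y)) ≤ ‖φ (U σ (f : Y))‖ := le_abs_self _
      _ ≤ ‖φ‖ * ‖U σ (f : Y)‖ := φ.le_opNorm _
      _ ≤ 1 * ‖U σ (f : Y)‖ := by
          exact mul_le_mul_of_nonneg_right hφ (norm_nonneg _)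
      _ = ‖U σ (f : Y)‖ := one_mul _
    have h3 : ‖U σ (f : Y)‖ ≤ ‖(f : Y)‖ := hUb σ hσ'.le f
    linarith
  have h4 := mul_le_mul_of_nonneg_left h1 (inv_nonneg.2 hσ'.le)
  rw [mul_zero] at h4
  simpa using h4

end Res

set_option maxHeartbeats 2000000 in
theorem stmt_7 {Y : Type*} [NormedAddCommGroup Y] [NormedSpace ℝ Y] [CompleteSpace Y]
    (DT DA : Submodule ℝ Y) (T : DT →ₗ[ℝ] Y) (A : DA →ₗ[ℝ] Y)
    (hT : IsContractionSemigroupGenerator DT T)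
    (hA : IsContractionSemigroupGenerator DA A)
    (DT' DA' : Submodule ℝ (StrongDual ℝ Y))
    (T' : DT' →ₗ[ℝ] StrongDual ℝ Y) (A' : DA' →ₗ[ℝ] StrongDual ℝ Y)
    (hTadj : ∀ (g : DT') (f : DT), (T' g) (f : Y) = (g : StrongDual ℝ Y) (T f))
    (hTmax : ∀ g : StrongDual ℝ Y,
      (∃ h : StrongDual ℝ Y, ∀ f : DT, h (f : Y) = g (T f)) → g ∈ DT')
    (hAadj : ∀ (g : DA') (f : DA), (A' g) (f : Y) = (g : StrongDual ℝ Y) (A f))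
    (hAmax : ∀ g : StrongDual ℝ Y,
      (∃ h : StrongDual ℝ Y, ∀ f : DA, h (f : Y) = g (A f)) → g ∈ DA')
    (hdense : Dense (DA' : Set (StrongDual ℝ Y))) :
    ∀ ξ : ℝ, ξ < 0 → ∀ (g : StrongDual ℝ Y) (hg1 : g ∈ DT') (hg2 : g ∈ DA'),
      |ξ| * ‖g‖ ≤ ‖T' ⟨g, hg1⟩ + A' ⟨g, hg2⟩ + ξ • g‖ := by
  intro ξ hξ g hg1 hg2
  set lam : ℝ := -ξ with hlam
  clear_value lam
  have hlam0 : 0 < lam := by simp [hlam]; linarith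
  have habs : |ξ| = lam := by rw [hlam]; exact abs_of_neg hξ
  rw [habs]
  set n : StrongDual ℝ Y := T' ⟨g, hg1⟩ + A' ⟨g, hg2⟩ + ξ • g with hn
  clear_value n
  -- suffices to prove for every ε > 0
  refine le_of_forall_pos_le_add ?_
  intro ε hε
  -- choose h' ∈ DA' close to A' g₂
  set u2 : StrongDual ℝ Y := A' ⟨g, hg2⟩ with hu2
  clear_value u2
  obtain ⟨h, hhmem, hhdist⟩ : ∃ h ∈ (DA' : Set (StrongDual ℝ Y)), dist u2 h < ε/4 :=
    hdense.exists_dist_lt u2 (by positivity)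
  set h' : DA' := ⟨h, hhmem⟩ with hh'
  -- choose μ large
  set μ : ℝ := max 1 (4 * ‖A' h'‖ / ε) with hμdef
  have hμ0 : (0:ℝ) < μ := lt_of_lt_of_le one_pos (le_max_left _ _)
  have hμbig : ‖A' h'‖ / μ ≤ ε/4 := by
    have hge : 4 * ‖A' h'‖ / ε ≤ μ := le_max_right _ _
    rw [div_le_iff₀ hε] at hge
    rw [div_le_iff₀ hμ0]
    nlinarith
  clear_value μ
  -- resolvent of A at μ
  obtain ⟨RA, hRAb, hRAf⟩ := csg_resolvent DA A hA hμ0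
  -- Yosida approximation
  set Bc : Y →L[ℝ] Y := μ • (μ • RA - ContinuousLinearMap.id ℝ Y) with hBc
  have hBcf : ∀ f : Y, Bc f = μ • (μ • RA f - f) := by
    intro f; rw [hBc]; simp
  have hBcA : ∀ f : Y, Bc f = μ • A ⟨RA f, (hRAf f).choose⟩ := by
    intro f
    rw [hBcf, (hRAf f).choose_spec]
  have hBnorm : ∀ f : Y, ‖Bc f‖ ≤ 2 * μ * ‖f‖ := by
    intro f
    rw [hBcf]
    rw [norm_smul, Real.norm_eq_abs, abs_of_pos hμ0]
    have h1 : ‖μ • RA f - f‖ ≤ μ * (μ⁻¹ * ‖f‖) + ‖f‖ := by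
      refine (norm_sub_le _ _).trans ?_
      gcongr
      rw [norm_smul, Real.norm_eq_abs, abs_of_pos hμ0]
      exact mul_le_mul_of_nonneg_left (hRAb f) hμ0.le
    rw [mul_inv_cancel_left₀ hμ0.ne'] at h1
    calc μ * ‖μ • RA f - f‖ ≤ μ * (‖f‖ + ‖f‖) := mul_le_mul_of_nonneg_left h1 hμ0.le
    _ = 2 * μ * ‖f‖ := by ring
  -- nonpositivity of Bc against norming functionals
  have hBdiss : ∀ (f : Y) (φ : Y →L[ℝ] ℝ), ‖φ‖ ≤ 1 → φ f = ‖f‖ → φ (Bc f) ≤ 0 := by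
    intro f φ hφ hφf
    rw [hBcf, _root_.map_smul, _root_.map_sub, _root_.map_smul, hφf]
    have h1 : φ (RA f) ≤ μ⁻¹ * ‖f‖ := by
      calc φ (RA f) ≤ ‖φ (RA f)‖ := le_abs_self _
      _ ≤ ‖φ‖ * ‖RA f‖ := φ.le_opNorm _
      _ ≤ 1 * (μ⁻¹ * ‖f‖) := by
          exact mul_le_mul hφ (hRAb f) (norm_nonneg _) zero_le_one
      _ = μ⁻¹ * ‖f‖ := one_mul _
    have h2 : μ • φ (RA f) - ‖f‖ ≤ 0 := by
      have := mul_le_mul_of_nonneg_left h1 hμ0.le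
      rw [mul_inv_cancel_left₀ hμ0.ne'] at this
      simpa [smul_eq_mul] using this
    have := mul_le_mul_of_nonneg_left h2 hμ0.le
    rw [mul_zero] at this
    simpa [smul_eq_mul] using this
  clear_value Bc
  -- dissipativity of T + Bc
  have hdiss : ∀ (f : DT) (ν : ℝ), 0 < ν →
      ν * ‖(f : Y)‖ ≤ ‖ν • (f : Y) - T f - Bc (f : Y)‖ := by
    intro f ν hν
    rcases eq_or_ne (f : Y) 0 with hf0 | hf0
    · have hTf0 : T f = 0 := by
        have : f = 0 := by exact_mod_cast Subtype.ext hf0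
        rw [this, map_zero]
      rw [hf0, hTf0, map_zero]
      simp
    obtain ⟨φ, hφn, hφf⟩ := exists_dual_vector ℝ (f : Y) (norm_ne_zero_iff.2 hf0)
    have hφf' : φ (f : Y) = ‖(f : Y)‖ := by exact_mod_cast hφf
    have h1 : φ (T f) ≤ 0 := gen_norming_nonpos DT T hT f φ hφn.le hφf'
    have h2 : φ (Bc (f : Y)) ≤ 0 := hBdiss _ φ hφn.le hφf'
    have h3 : ν * ‖(f : Y)‖ ≤ φ (ν • (f : Y) - T f - Bc (f : Y)) := by
      rw [_root_.map_sub, _root_.map_sub, _root_.map_smul, hφf', smul_eq_mul]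
      linarith
    calc ν * ‖(f : Y)‖ ≤ φ (ν • (f : Y) - T f - Bc (f : Y)) := h3
    _ ≤ ‖φ (ν • (f : Y) - T f - Bc (f : Y))‖ := le_abs_self _
    _ ≤ ‖φ‖ * ‖ν • (f : Y) - T f - Bc (f : Y)‖ := φ.le_opNorm _
    _ = ‖ν • (f : Y) - T f - Bc (f : Y)‖ := by rw [hφn, one_mul]

  -- resolvent of T at lam0
  set lam0 : ℝ := 2*μ + lam with hlam0def
  clear_value lam0
  have hlam0pos : 0 < lam0 := by rw [hlam0def]; linarith
  obtain ⟨RT, hRTb, hRTf⟩ := csg_resolvent DT T hT hlam0pos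
  set K : NNReal := Real.toNNReal (2*μ/lam0) with hK
  have hKcoe : (K : ℝ) = 2*μ/lam0 := Real.coe_toNNReal _ (by positivity)
  have hKlt : K < 1 := by
    rw [← NNReal.coe_lt_coe, hKcoe, NNReal.coe_one]
    rw [div_lt_one hlam0pos, hlam0def]
    linarith
  -- the solvability predicate
  have hbound : ∀ (ν : ℝ), 0 < ν → ∀ (x y : Y) (hx : x ∈ DT),
      ν • x - T ⟨x, hx⟩ - Bc x = y → ‖x‖ ≤ ν⁻¹ * ‖y‖ := by
    intro ν hν x y hx heq
    have h1 : ν * ‖x‖ ≤ ‖ν • x - T ⟨x, hx⟩ - Bc x‖ := hdiss ⟨x, hx⟩ ν hν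
    rw [heq] at h1
    rw [← div_eq_inv_mul, le_div_iff₀ hν, mul_comm]
    exact h1
  have hsub : ∀ (ν : ℝ) (x y x' y' : Y) (hx : x ∈ DT) (hx' : x' ∈ DT),
      ν • x - T ⟨x, hx⟩ - Bc x = y → ν • x' - T ⟨x', hx'⟩ - Bc x' = y' →
      ∃ hs : x - x' ∈ DT, ν • (x - x') - T ⟨x - x', hs⟩ - Bc (x - x') = y - y' := by
    intro ν x y x' y' hx hx' heq heq'
    refine ⟨sub_mem hx hx', ?_⟩
    have hTsub : T ⟨x - x', sub_mem hx hx'⟩ = T ⟨x, hx⟩ - T ⟨x', hx'⟩ := by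
      have : (⟨x - x', sub_mem hx hx'⟩ : DT) = ⟨x, hx⟩ - ⟨x', hx'⟩ := rfl
      rw [this, map_sub]
    rw [hTsub, map_sub, ← heq, ← heq']
    module
  -- surjectivity at lam0
  have hsurj0 : ∀ y : Y, ∃ x : Y, ∃ hx : x ∈ DT,
      lam0 • x - T ⟨x, hx⟩ - Bc x = y := by
    intro y
    set Φ : Y → Y := fun x => RT (y + Bc x) with hΦ
    have hlip : LipschitzWith K Φ := by
      apply LipschitzWith.of_dist_le_mul
      intro x x'
      rw [dist_eq_norm, dist_eq_norm, hKcoe]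
      have h1 : Φ x - Φ x' = RT (Bc (x - x')) := by
        rw [hΦ]
        show RT (y + Bc x) - RT (y + Bc x') = _
        rw [← map_sub]
        congr 1
        rw [map_sub]
        abel
      rw [h1]
      calc ‖RT (Bc (x - x'))‖ ≤ lam0⁻¹ * ‖Bc (x - x')‖ := hRTb _
      _ ≤ lam0⁻¹ * (2 * μ * ‖x - x'‖) :=
          mul_le_mul_of_nonneg_left (hBnorm _) (by positivity)
      _ = 2*μ/lam0 * ‖x - x'‖ := by field_simp
    obtain ⟨x, hfix, -⟩ := ContractingWith.exists_fixedPoint ⟨hKlt, hlip⟩ y (edist_ne_top _ _)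
    have hx : RT (y + Bc x) = x := hfix
    obtain ⟨hmem, hTeq⟩ := hRTf (y + Bc x)
    have hmemx : x ∈ DT := hx ▸ hmem
    have hT2 : T ⟨x, hmemx⟩ = lam0 • x - (y + Bc x) := by
      have h2 : (⟨x, hmemx⟩ : DT) = ⟨RT (y + Bc x), hmem⟩ := Subtype.ext hx.symm
      rw [h2, hTeq, hx]
    refine ⟨x, hmemx, ?_⟩
    rw [hT2]
    abel
  -- surjectivity at lam via Neumann step
  have hsurj : ∀ y : Y, ∃ x : Y, ∃ hx : x ∈ DT,
      lam • x - T ⟨x, hx⟩ - Bc x = y := by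
    intro y
    choose X hXmem hXeq using hsurj0
    set Ψ : Y → Y := fun z => y - (lam - lam0) • X z with hΨ
    have hlip : LipschitzWith K Ψ := by
      apply LipschitzWith.of_dist_le_mul
      intro z z'
      rw [dist_eq_norm, dist_eq_norm, hKcoe]
      have h1 : Ψ z - Ψ z' = -((lam - lam0) • (X z - X z')) := by
        rw [hΨ]
        show (y - (lam - lam0) • X z) - (y - (lam - lam0) • X z') = _
        rw [smul_sub]
        abel
      rw [h1, norm_neg, norm_smul, Real.norm_eq_abs]
      have habs2 : |lam - lam0| = 2*μ := by
        rw [abs_of_neg (by rw [hlam0def]; linarith), hlam0def]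
        ring
      rw [habs2]
      obtain ⟨hs, hseq⟩ := hsub lam0 (X z) z (X z') z' (hXmem z) (hXmem z')
        (hXeq z) (hXeq z')
      have h2 : ‖X z - X z'‖ ≤ lam0⁻¹ * ‖z - z'‖ :=
        hbound lam0 hlam0pos _ _ hs hseq
      calc 2*μ * ‖X z - X z'‖ ≤ 2*μ * (lam0⁻¹ * ‖z - z'‖) :=
          mul_le_mul_of_nonneg_left h2 (by positivity)
      _ = 2*μ/lam0 * ‖z - z'‖ := by field_simp
    obtain ⟨z, hfix, -⟩ := ContractingWith.exists_fixedPoint ⟨hKlt, hlip⟩ y (edist_ne_top _ _)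
    have hz : y - (lam - lam0) • X z = z := hfix
    refine ⟨X z, hXmem z, ?_⟩
    calc lam • X z - T ⟨X z, hXmem z⟩ - Bc (X z)
        = (lam0 • X z - T ⟨X z, hXmem z⟩ - Bc (X z)) + (lam - lam0) • X z := by module
    _ = z + (lam - lam0) • X z := by rw [hXeq z]
    _ = (y - (lam - lam0) • X z) + (lam - lam0) • X z := by rw [hz]
    _ = y := by abel
  -- the approximated dual element
  set m : StrongDual ℝ Y := T' ⟨g, hg1⟩ + g.comp Bc + ξ • g with hm
  clear_value m
  have hgb : ∀ y : Y, ‖g y‖ ≤ (lam⁻¹ * ‖m‖) * ‖y‖ := by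
    intro y
    obtain ⟨x, hx, heq⟩ := hsurj y
    have hmx : m x = -(g y) := by
      have h1 : T ⟨x, hx⟩ + Bc x + ξ • x = -y := by
        rw [← heq, hlam]
        module
      have h2 : m x = g (T ⟨x, hx⟩ + Bc x + ξ • x) := by
        rw [hm]
        simp only [ContinuousLinearMap.add_apply, ContinuousLinearMap.coe_smul',
          Pi.smul_apply, ContinuousLinearMap.comp_apply, map_add, _root_.map_smul]
        rw [hTadj ⟨g, hg1⟩ ⟨x, hx⟩]
      rw [h2, h1, map_neg]
    have hxb : ‖x‖ ≤ lam⁻¹ * ‖y‖ := hbound lam hlam0 x y hx heq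
    calc ‖g y‖ = ‖m x‖ := by rw [hmx, norm_neg]
    _ ≤ ‖m‖ * ‖x‖ := m.le_opNorm x
    _ ≤ ‖m‖ * (lam⁻¹ * ‖y‖) :=
        mul_le_mul_of_nonneg_left hxb (norm_nonneg m)
    _ = (lam⁻¹ * ‖m‖) * ‖y‖ := by ring
  have hgnorm : lam * ‖g‖ ≤ ‖m‖ := by
    have h1 : ‖g‖ ≤ lam⁻¹ * ‖m‖ :=
      g.opNorm_le_bound (by positivity) hgb
    calc lam * ‖g‖ ≤ lam * (lam⁻¹ * ‖m‖) := mul_le_mul_of_nonneg_left h1 hlam0.le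
    _ = ‖m‖ := by field_simp
  -- compare m with n
  have hgBc : ∀ f : Y, g (Bc f) = μ * u2 (RA f) := by
    intro f
    rw [hBcA f, _root_.map_smul, smul_eq_mul, hu2,
      hAadj ⟨g, hg2⟩ ⟨RA f, (hRAf f).choose⟩]
  have hdecomp : g.comp Bc - u2 =
      (μ • ((u2 - h).comp RA)) + (μ • (h.comp RA) - h) + (h - u2) := by
    ext f
    simp only [ContinuousLinearMap.add_apply, ContinuousLinearMap.sub_apply,
      ContinuousLinearMap.coe_smul', Pi.smul_apply, ContinuousLinearMap.comp_apply,
      smul_eq_mul]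
    rw [hgBc f]
    ring
  have hb1 : ‖μ • ((u2 - h).comp RA)‖ ≤ ‖u2 - h‖ := by
    apply ContinuousLinearMap.opNorm_le_bound _ (norm_nonneg _)
    intro f
    simp only [ContinuousLinearMap.coe_smul', Pi.smul_apply,
      ContinuousLinearMap.comp_apply, norm_smul, Real.norm_eq_abs, abs_of_pos hμ0]
    calc μ * ‖(u2 - h) (RA f)‖ ≤ μ * (‖u2 - h‖ * (μ⁻¹ * ‖f‖)) := by
          apply mul_le_mul_of_nonneg_left _ hμ0.le
          exact ((u2 - h).le_opNorm _).trans
            (mul_le_mul_of_nonneg_left (hRAb f) (norm_nonneg _))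
    _ = ‖u2 - h‖ * ‖f‖ := by field_simp
  have hb2 : ‖μ • (h.comp RA) - h‖ ≤ ‖A' h'‖ * μ⁻¹ := by
    apply ContinuousLinearMap.opNorm_le_bound _ (by positivity)
    intro f
    have h1 : (μ • (h.comp RA) - h) f = (A' h') (RA f) := by
      simp only [ContinuousLinearMap.sub_apply, ContinuousLinearMap.coe_smul',
        Pi.smul_apply, ContinuousLinearMap.comp_apply, smul_eq_mul]
      rw [hAadj h' ⟨RA f, (hRAf f).choose⟩, (hRAf f).choose_spec]
      rw [_root_.map_sub, _root_.map_smul, smul_eq_mul]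
    rw [h1]
    calc ‖(A' h') (RA f)‖ ≤ ‖A' h'‖ * ‖RA f‖ := (A' h').le_opNorm _
    _ ≤ ‖A' h'‖ * (μ⁻¹ * ‖f‖) :=
        mul_le_mul_of_nonneg_left (hRAb f) (norm_nonneg _)
    _ = ‖A' h'‖ * μ⁻¹ * ‖f‖ := by ring
  have hmn : ‖g.comp Bc - u2‖ ≤ ε := by
    rw [hdecomp]
    have hd : ‖u2 - h‖ < ε/4 := by rwa [← dist_eq_norm]
    have hd' : ‖h - u2‖ < ε/4 := by rwa [norm_sub_rev]
    have hb2' : ‖A' h'‖ * μ⁻¹ ≤ ε/4 := by rwa [← div_eq_mul_inv]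
    calc ‖(μ • ((u2 - h).comp RA)) + (μ • (h.comp RA) - h) + (h - u2)‖
        ≤ ‖(μ • ((u2 - h).comp RA)) + (μ • (h.comp RA) - h)‖ + ‖h - u2‖ := norm_add_le _ _
    _ ≤ ‖μ • ((u2 - h).comp RA)‖ + ‖μ • (h.comp RA) - h‖ + ‖h - u2‖ := by
        have := norm_add_le (μ • ((u2 - h).comp RA)) (μ • (h.comp RA) - h)
        linarith
    _ ≤ ‖u2 - h‖ + (‖A' h'‖ * μ⁻¹) + ‖h - u2‖ := by linarith
    _ ≤ ε := by linarith
  have hmneq : m - n = g.comp Bc - u2 := by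
    rw [hm, hn]
    abel
  calc lam * ‖g‖ ≤ ‖m‖ := hgnorm
  _ = ‖n + (m - n)‖ := by congr 1; abel
  _ ≤ ‖n‖ + ‖m - n‖ := norm_add_le _ _
  _ ≤ ‖n‖ + ε := by rw [hmneq]; linarith
end
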